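/- arXiv:1504.06136 — 2 statements merged into one kernel-verified Lean document; each statement's English description precedes it below -/
import Mathlib

section
/- Equivalence of the Csiszár–Körner region and the L₁ = 0 degraded-message-set region (Appendix B). Fix finite alphabets 𝒳, 𝒴₁, 𝒴₂ and a broadcast channel kernel Q(y₁,y₂|x). For finite sets 𝒲, 𝒰 and a joint PMF of the form P_{W,U} P_{X|U} (so that (Y₁,Y₂) − X − U − W is a Markov chain, with (Y₁,Y₂)|X ~ Q(·,·|X)), define region A as the union, over all finite 𝒲, 𝒰 and all such PMFs, of the sets {(R₀,R₁) ∈ ℝ₊² : R₀ ≤ I(W;Y₁); R₀ ≤ I(W;Y₂); R₁ ≤ I(U;Y₁|W) − I(U;Y₂|W)}. Define region B as the union, over the same domain, of the sets {(R₀,R₁) ∈ ℝ₊² : R₀ ≤ I(W;Y₂); R₁ ≤ I(U;Y₁|W) − I(U;Y₂|W); R₀+R₁ ≤ I(W,U;Y₁) − I(U;Y₂|W)}. Then A = B. -/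
open scoped Classical BigOperators

noncomputable section

/-- Entropy (base 2) of a finitely supported distribution given as a function. -/
def entFun {α : Type} [Fintype α] (q : α → ℝ) : ℝ :=
  -∑ a, q a * Real.logb 2 (q a)

/-- Distribution (pushforward) of the random variable `A` under the pmf `p`. -/
def distOf {Ω α : Type} [Fintype Ω] [Fintype α] (p : Ω → ℝ) (A : Ω → α) : α → ℝ :=
  fun a => ∑ ω, if A ω = a then p ω else 0

/-- Shannon entropy `H(A)` (base 2). -/
def Hent {Ω α : Type} [Fintype Ω] [Fintype α] (p : Ω → ℝ) (A : Ω → α) : ℝ :=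
  entFun (distOf p A)

/-- Conditional entropy `H(A|B)`. -/
def CHent {Ω α β : Type} [Fintype Ω] [Fintype α] [Fintype β]
    (p : Ω → ℝ) (A : Ω → α) (B : Ω → β) : ℝ :=
  Hent p (fun ω => (A ω, B ω)) - Hent p B

/-- Mutual information `I(A;B)`. -/
def MI {Ω α β : Type} [Fintype Ω] [Fintype α] [Fintype β]
    (p : Ω → ℝ) (A : Ω → α) (B : Ω → β) : ℝ :=
  Hent p A + Hent p B - Hent p (fun ω => (A ω, B ω))

/-- Conditional mutual information `I(A;B|C)`. -/
def CMI {Ω α β γ : Type} [Fintype Ω] [Fintype α] [Fintype β] [Fintype γ]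
    (p : Ω → ℝ) (A : Ω → α) (B : Ω → β) (C : Ω → γ) : ℝ :=
  Hent p (fun ω => (A ω, C ω)) + Hent p (fun ω => (B ω, C ω))
    - Hent p (fun ω => (A ω, B ω, C ω)) - Hent p C

/-- `p` is a probability mass function on the finite type `α`. -/
def IsPMF {α : Type} [Fintype α] (p : α → ℝ) : Prop :=
  (∀ a, 0 ≤ p a) ∧ ∑ a, p a = 1

/-- `A` and `B` are conditionally independent given `C` (under the pmf `p`). -/
def CondIndep {Ω α β γ : Type} [Fintype Ω] [Fintype α] [Fintype β] [Fintype γ]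
    (p : Ω → ℝ) (A : Ω → α) (B : Ω → β) (C : Ω → γ) : Prop :=
  ∀ a b c,
    distOf p (fun ω => (A ω, B ω, C ω)) (a, b, c) * distOf p C c
      = distOf p (fun ω => (A ω, C ω)) (a, c) * distOf p (fun ω => (B ω, C ω)) (b, c)

/-- A discrete memoryless broadcast channel with input alphabet `X` and
output alphabets `Y1`, `Y2`. -/
structure BCChannel (X Y1 Y2 : Type) [Fintype X] [Fintype Y1] [Fintype Y2] where
  Q : X → Y1 → Y2 → ℝ
  nonneg : ∀ x y1 y2, 0 ≤ Q x y1 y2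
  sum_one : ∀ x, ∑ y1, ∑ y2, Q x y1 y2 = 1

/-- The message-set size `⌈2^{nR}⌉`. -/
def msgSize (n : ℕ) (R : ℝ) : ℕ := ⌈(2 : ℝ) ^ ((n : ℝ) * R)⌉₊

section basic
variable {Ω Ω' α β γ : Type} [Fintype Ω] [Fintype Ω'] [Fintype α] [Fintype β] [Fintype γ]

lemma distOf_nonneg (p : Ω → ℝ) (hp : ∀ ω, 0 ≤ p ω) (A : Ω → α) (a : α) :
    0 ≤ distOf p A a := by
  unfold distOf
  refine Finset.sum_nonneg fun ω _ => ?_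
  split
  · exact hp ω
  · exact le_refl 0

lemma sum_distOf (p : Ω → ℝ) (A : Ω → α) : ∑ a, distOf p A a = ∑ ω, p ω := by
  unfold distOf
  rw [Finset.sum_comm]
  exact Finset.sum_congr rfl fun ω _ => by simp

lemma distOf_inj_apply (p : Ω → ℝ) (g : Ω → α) (hg : Function.Injective g) (ω0 : Ω) :
    distOf p g (g ω0) = p ω0 := by
  unfold distOf
  rw [Finset.sum_eq_single ω0]
  · simp
  · intro ω _ hne
    rw [if_neg (fun h => hne (hg h))]
  · simp

lemma Hent_comp_inj (p : Ω → ℝ) (A : Ω → α) (B : Ω → β) (f : α → β)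
    (hf : Function.Injective f) (h : ∀ ω, B ω = f (A ω)) : Hent p B = Hent p A := by
  unfold Hent entFun
  congr 1
  have himg : ∀ b : β, b ∉ Finset.univ.image f → distOf p B b = 0 := by
    intro b hb
    unfold distOf
    refine Finset.sum_eq_zero fun ω _ => ?_
    rw [if_neg]
    intro hBe
    exact hb (Finset.mem_image.2 ⟨A ω, Finset.mem_univ _, by rw [← h ω, hBe]⟩)
  have hval : ∀ a : α, distOf p B (f a) = distOf p A a := by
    intro a
    unfold distOf
    refine Finset.sum_congr rfl fun ω _ => ?_
    rw [h ω]
    by_cases hA : A ω = a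
    · rw [if_pos (by rw [hA]), if_pos hA]
    · rw [if_neg (fun he => hA (hf he)), if_neg hA]
  rw [← Finset.sum_subset (Finset.subset_univ (Finset.univ.image f))
      (fun b _ hb => by rw [himg b hb, zero_mul]),
    Finset.sum_image (fun a _ b _ hab => hf hab)]
  exact Finset.sum_congr rfl fun a _ => by rw [hval a]

lemma Hent_reindex (E : Ω' ≃ Ω) (p : Ω → ℝ) (p' : Ω' → ℝ)
    (hp : ∀ ω', p' ω' = p (E ω')) (A : Ω → α) (A' : Ω' → α)
    (hA : ∀ ω', A' ω' = A (E ω')) : Hent p' A' = Hent p A := by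
  unfold Hent
  congr 1
  funext a
  unfold distOf
  rw [← E.sum_comp (fun ω => if A ω = a then p ω else 0)]
  exact Finset.sum_congr rfl fun ω' _ => by rw [hA, hp]

lemma MI_pair (p : Ω → ℝ) (A : Ω → α) (B : Ω → β) (C : Ω → γ) :
    MI p (fun ω => (A ω, B ω)) C = MI p A C + CMI p B C A := by
  unfold MI CMI
  have h1 : Hent p (fun ω => (B ω, A ω)) = Hent p (fun ω => (A ω, B ω)) :=
    Hent_comp_inj p _ _ (fun z => (z.2, z.1))
      (fun x y h => by cases x; cases y; simpa [Prod.ext_iff, and_comm] using h)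
      (fun ω => rfl)
  have h2 : Hent p (fun ω => (C ω, A ω)) = Hent p (fun ω => (A ω, C ω)) :=
    Hent_comp_inj p _ _ (fun z => (z.2, z.1))
      (fun x y h => by cases x; cases y; simpa [Prod.ext_iff, and_comm] using h)
      (fun ω => rfl)
  have h3 : Hent p (fun ω => (B ω, C ω, A ω)) = Hent p (fun ω => ((A ω, B ω), C ω)) :=
    Hent_comp_inj p _ _ (fun z => (z.1.2, z.2, z.1.1))
      (fun x y h => by
        cases x; cases y
        simp only [Prod.ext_iff] at h ⊢
        exact ⟨⟨h.2.2, h.1⟩, h.2.1⟩)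
      (fun ω => rfl)
  rw [h1, h2, h3]; ring

end basic
section analytic
variable {ι : Type} [Fintype ι]

lemma sum_scale_logb (c : ℝ) (hc : 0 ≤ c) (s : ι → ℝ) (hs : ∀ i, 0 ≤ s i) :
    ∑ i, (c * s i) * Real.logb 2 (c * s i)
      = c * ∑ i, s i * Real.logb 2 (s i) + (c * Real.logb 2 c) * ∑ i, s i := by
  rcases eq_or_lt_of_le hc with hc0 | hcpos
  · simp [← hc0]
  · rw [Finset.mul_sum, Finset.mul_sum, ← Finset.sum_add_distrib]
    refine Finset.sum_congr rfl fun i _ => ?_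
    rcases eq_or_lt_of_le (hs i) with hs0 | hspos
    · simp [← hs0]
    · rw [Real.logb_mul (ne_of_gt hcpos) (ne_of_gt hspos)]; ring

lemma gibbs (P Q : ι → ℝ) (hP : ∀ i, 0 ≤ P i) (hQ : ∀ i, 0 ≤ Q i)
    (habs : ∀ i, Q i = 0 → P i = 0) (hsum : ∑ i, Q i ≤ ∑ i, P i) :
    0 ≤ ∑ i, P i * (Real.logb 2 (P i) - Real.logb 2 (Q i)) := by
  have key : ∑ i, P i * (Real.log (Q i) - Real.log (P i)) ≤ 0 := by
    have h1 : ∑ i, P i * (Real.log (Q i) - Real.log (P i)) ≤ ∑ i, (Q i - P i) := by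
      refine Finset.sum_le_sum fun i _ => ?_
      rcases eq_or_lt_of_le (hP i) with hP0 | hPpos
      · rw [← hP0]; simpa using hQ i
      · have hQpos : 0 < Q i := lt_of_le_of_ne (hQ i) (fun h => by
          have := habs i h.symm; linarith)
        have hlog : Real.log (Q i) - Real.log (P i) = Real.log (Q i / P i) :=
          (Real.log_div (ne_of_gt hQpos) (ne_of_gt hPpos)).symm
        rw [hlog]
        have hle : Real.log (Q i / P i) ≤ Q i / P i - 1 :=
          Real.log_le_sub_one_of_pos (div_pos hQpos hPpos)
        have := mul_le_mul_of_nonneg_left hle (le_of_lt hPpos)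
        calc P i * Real.log (Q i / P i) ≤ P i * (Q i / P i - 1) := this
          _ = Q i - P i := by field_simp
    rw [Finset.sum_sub_distrib] at h1
    linarith
  have hlog2 : (0:ℝ) < Real.log 2 := Real.log_pos (by norm_num)
  have hrw : ∑ i, P i * (Real.logb 2 (P i) - Real.logb 2 (Q i))
      = (∑ i, P i * (Real.log (P i) - Real.log (Q i))) / Real.log 2 := by
    rw [Finset.sum_div]
    refine Finset.sum_congr rfl fun i _ => ?_
    unfold Real.logb
    field_simp
  rw [hrw]
  apply div_nonneg _ (le_of_lt hlog2)
  have : ∑ i, P i * (Real.log (P i) - Real.log (Q i))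
      = -∑ i, P i * (Real.log (Q i) - Real.log (P i)) := by
    rw [← Finset.sum_neg_distrib]
    exact Finset.sum_congr rfl fun i _ => by ring
  rw [this]
  linarith

end analytic
section cminonneg
variable {Ω α β γ : Type} [Fintype Ω] [Fintype α] [Fintype β] [Fintype γ]

lemma distOf_marg12 (p : Ω → ℝ) (A : Ω → α) (B : Ω → β) (C : Ω → γ) (a : α) (c : γ) :
    distOf p (fun ω => (A ω, C ω)) (a, c)
      = ∑ b, distOf p (fun ω => (A ω, B ω, C ω)) (a, b, c) := by
  unfold distOf
  rw [Finset.sum_comm]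
  refine Finset.sum_congr rfl fun ω _ => ?_
  by_cases h1 : A ω = a <;> by_cases h2 : C ω = c <;>
    simp [Prod.ext_iff, h1, h2]

lemma distOf_marg21 (p : Ω → ℝ) (A : Ω → α) (B : Ω → β) (C : Ω → γ) (b : β) (c : γ) :
    distOf p (fun ω => (B ω, C ω)) (b, c)
      = ∑ a, distOf p (fun ω => (A ω, B ω, C ω)) (a, b, c) := by
  unfold distOf
  rw [Finset.sum_comm]
  refine Finset.sum_congr rfl fun ω _ => ?_
  by_cases h1 : B ω = b <;> by_cases h2 : C ω = c <;>
    simp [Prod.ext_iff, h1, h2]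

lemma distOf_marg1 (p : Ω → ℝ) (A : Ω → α) (C : Ω → γ) (c : γ) :
    distOf p C c = ∑ a, distOf p (fun ω => (A ω, C ω)) (a, c) := by
  unfold distOf
  rw [Finset.sum_comm]
  refine Finset.sum_congr rfl fun ω _ => ?_
  by_cases h2 : C ω = c <;> simp [Prod.ext_iff, h2]

lemma distOf_marg3 (p : Ω → ℝ) (A : Ω → α) (B : Ω → β) (C : Ω → γ) (c : γ) :
    distOf p C c = ∑ a, ∑ b, distOf p (fun ω => (A ω, B ω, C ω)) (a, b, c) := by
  rw [distOf_marg1 p A C c]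
  exact Finset.sum_congr rfl fun a _ => distOf_marg12 p A B C a c

lemma cmi_core (π : α × β × γ → ℝ) (h0 : ∀ z, 0 ≤ π z) (h1 : ∑ z, π z = 1) :
    0 ≤ entFun (fun y : α × γ => ∑ b, π (y.1, b, y.2))
        + entFun (fun y : β × γ => ∑ a, π (a, y.1, y.2))
        - entFun π - entFun (fun c : γ => ∑ a, ∑ b, π (a, b, c)) := by
  classical
  have hmAC0 : ∀ (a : α) (c : γ), 0 ≤ ∑ b, π (a, b, c) :=
    fun a c => Finset.sum_nonneg fun b _ => h0 _
  have hmBC0 : ∀ (b : β) (c : γ), 0 ≤ ∑ a, π (a, b, c) :=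
    fun b c => Finset.sum_nonneg fun a _ => h0 _
  have hmC0 : ∀ c, 0 ≤ ∑ a, ∑ b, π (a, b, c) :=
    fun c => Finset.sum_nonneg fun a _ => Finset.sum_nonneg fun b _ => h0 _
  -- reshuffled sum identities
  have hS1 : ∑ z : α × β × γ, π z * Real.logb 2 (∑ b, π (z.1, b, z.2.2))
      = ∑ y : α × γ, (∑ b, π (y.1, b, y.2)) * Real.logb 2 (∑ b, π (y.1, b, y.2)) := by
    rw [Fintype.sum_equiv (⟨fun z : α × β × γ => ((z.1, z.2.2), z.2.1),
        fun y => (y.1.1, y.2, y.1.2), fun _ => rfl, fun _ => rfl⟩ : (α × β × γ) ≃ ((α × γ) × β))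
      (fun z => π z * Real.logb 2 (∑ b, π (z.1, b, z.2.2)))
      (fun y => π (y.1.1, y.2, y.1.2) * Real.logb 2 (∑ b, π (y.1.1, b, y.1.2)))
      (fun z => rfl)]
    rw [Fintype.sum_prod_type]
    refine Finset.sum_congr rfl fun y _ => ?_
    exact (Finset.sum_mul Finset.univ (fun b => π (y.1, b, y.2))
      (Real.logb 2 (∑ b, π (y.1, b, y.2)))).symm
  have hS2 : ∑ z : α × β × γ, π z * Real.logb 2 (∑ a, π (a, z.2.1, z.2.2))
      = ∑ y : β × γ, (∑ a, π (a, y.1, y.2)) * Real.logb 2 (∑ a, π (a, y.1, y.2)) := by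
    rw [Fintype.sum_equiv (⟨fun z : α × β × γ => ((z.2.1, z.2.2), z.1),
        fun y => (y.2, y.1.1, y.1.2), fun _ => rfl, fun _ => rfl⟩ : (α × β × γ) ≃ ((β × γ) × α))
      (fun z => π z * Real.logb 2 (∑ a, π (a, z.2.1, z.2.2)))
      (fun y => π (y.2, y.1.1, y.1.2) * Real.logb 2 (∑ a, π (a, y.1.1, y.1.2)))
      (fun z => rfl)]
    rw [Fintype.sum_prod_type]
    refine Finset.sum_congr rfl fun y _ => ?_
    exact (Finset.sum_mul Finset.univ (fun a => π (a, y.1, y.2))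
      (Real.logb 2 (∑ a, π (a, y.1, y.2)))).symm
  have hS3 : ∑ z : α × β × γ, π z * Real.logb 2 (∑ a, ∑ b, π (a, b, z.2.2))
      = ∑ c : γ, (∑ a, ∑ b, π (a, b, c)) * Real.logb 2 (∑ a, ∑ b, π (a, b, c)) := by
    rw [Fintype.sum_equiv (⟨fun z : α × β × γ => (z.2.2, z.1, z.2.1),
        fun y => (y.2.1, y.2.2, y.1), fun _ => rfl, fun _ => rfl⟩ : (α × β × γ) ≃ (γ × α × β))
      (fun z => π z * Real.logb 2 (∑ a, ∑ b, π (a, b, z.2.2)))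
      (fun y => π (y.2.1, y.2.2, y.1) * Real.logb 2 (∑ a, ∑ b, π (a, b, y.1)))
      (fun z => rfl)]
    rw [Fintype.sum_prod_type]
    refine Finset.sum_congr rfl fun c _ => ?_
    show ∑ y : α × β, π (y.1, y.2, c) * Real.logb 2 (∑ a, ∑ b, π (a, b, c)) = _
    calc ∑ y : α × β, π (y.1, y.2, c) * Real.logb 2 (∑ a, ∑ b, π (a, b, c))
        = (∑ y : α × β, π (y.1, y.2, c)) * Real.logb 2 (∑ a, ∑ b, π (a, b, c)) :=
          (Finset.sum_mul Finset.univ (fun y : α × β => π (y.1, y.2, c)) _).symm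
      _ = (∑ a, ∑ b, π (a, b, c)) * Real.logb 2 (∑ a, ∑ b, π (a, b, c)) := by
          rw [Fintype.sum_prod_type]
  have htot : ∑ c, ∑ a, ∑ b, π (a, b, c) = ∑ z, π z := by
    rw [Fintype.sum_equiv (⟨fun z : α × β × γ => (z.2.2, z.1, z.2.1),
        fun y => (y.2.1, y.2.2, y.1), fun _ => rfl, fun _ => rfl⟩ : (α × β × γ) ≃ (γ × α × β))
      (fun z => π z) (fun y => π (y.2.1, y.2.2, y.1)) (fun z => rfl)]
    rw [Fintype.sum_prod_type]
    refine Finset.sum_congr rfl fun c _ => ?_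
    show _ = ∑ y : α × β, π (y.1, y.2, c)
    rw [Fintype.sum_prod_type]
  -- the reference distribution q
  set q : α × β × γ → ℝ := fun z =>
    if (∑ a, ∑ b, π (a, b, z.2.2)) = 0 then 0
    else (∑ b, π (z.1, b, z.2.2)) * (∑ a, π (a, z.2.1, z.2.2)) / (∑ a, ∑ b, π (a, b, z.2.2))
    with hqdef
  have hqpt : ∀ a b c, q (a, b, c) =
      if (∑ a', ∑ b', π (a', b', c)) = 0 then 0
      else (∑ b', π (a, b', c)) * (∑ a', π (a', b, c)) / (∑ a', ∑ b', π (a', b', c)) := by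
    intro a b c; rw [hqdef]
  have hq0 : ∀ z, 0 ≤ q z := by
    rintro ⟨a, b, c⟩
    rw [hqpt]
    split
    · exact le_refl 0
    · exact div_nonneg (mul_nonneg (hmAC0 a c) (hmBC0 b c)) (hmC0 c)
  have hqpos : ∀ a b c, 0 < π (a, b, c) → 0 < q (a, b, c) := by
    intro a b c hz
    have hA : 0 < ∑ b', π (a, b', c) :=
      lt_of_lt_of_le hz (Finset.single_le_sum (fun b' _ => h0 (a, b', c)) (Finset.mem_univ b))
    have hB : 0 < ∑ a', π (a', b, c) :=
      lt_of_lt_of_le hz (Finset.single_le_sum (fun a' _ => h0 (a', b, c)) (Finset.mem_univ a))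
    have hC : 0 < ∑ a', ∑ b', π (a', b', c) :=
      lt_of_lt_of_le hA (Finset.single_le_sum (fun a' _ => hmAC0 a' c) (Finset.mem_univ a))
    rw [hqpt, if_neg (ne_of_gt hC)]
    exact div_pos (mul_pos hA hB) hC
  have habs : ∀ z, q z = 0 → π z = 0 := by
    rintro ⟨a, b, c⟩ hqz
    by_contra hne
    have := hqpos a b c (lt_of_le_of_ne (h0 _) (Ne.symm hne))
    linarith
  have hsumq : ∑ z, q z ≤ ∑ z, π z := by
    have hqc : ∑ z : α × β × γ, q z
        = ∑ c : γ, (if (∑ a, ∑ b, π (a, b, c)) = 0 then 0 else (∑ a, ∑ b, π (a, b, c))) := by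
      rw [Fintype.sum_equiv (⟨fun z : α × β × γ => (z.2.2, z.1, z.2.1),
          fun y => (y.2.1, y.2.2, y.1), fun _ => rfl, fun _ => rfl⟩ : (α × β × γ) ≃ (γ × α × β))
        (fun z => q z) (fun y => q (y.2.1, y.2.2, y.1)) (fun z => rfl)]
      rw [Fintype.sum_prod_type]
      refine Finset.sum_congr rfl fun c _ => ?_
      show ∑ y : α × β, q (y.1, y.2, c) = _
      by_cases hc : (∑ a, ∑ b, π (a, b, c)) = 0
      · rw [if_pos hc]
        refine Finset.sum_eq_zero fun y _ => ?_
        rw [hqpt, if_pos hc]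
      · rw [if_neg hc, Fintype.sum_prod_type]
        have step1 : ∀ a : α, ∑ b, q (a, b, c)
            = (∑ b', π (a, b', c)) * (∑ b, ∑ a', π (a', b, c)) / (∑ a', ∑ b', π (a', b', c)) := by
          intro a
          rw [Finset.mul_sum, Finset.sum_div]
          refine Finset.sum_congr rfl fun b _ => ?_
          rw [hqpt, if_neg hc]
        rw [Finset.sum_congr rfl fun a _ => step1 a]
        have hcomm : (∑ b, ∑ a', π (a', b, c)) = ∑ a', ∑ b', π (a', b', c) := Finset.sum_comm
        simp only [hcomm]
        rw [← Finset.sum_div, ← Finset.sum_mul]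
        rw [mul_div_assoc, div_self hc, mul_one]
    calc ∑ z, q z = _ := hqc
      _ ≤ ∑ c, ∑ a, ∑ b, π (a, b, c) := by
          refine Finset.sum_le_sum fun c _ => ?_
          split
          · exact hmC0 c
          · exact le_refl _
      _ = ∑ z, π z := htot
  -- rewrite the goal as a relative entropy
  have hgoal : entFun (fun y : α × γ => ∑ b, π (y.1, b, y.2))
        + entFun (fun y : β × γ => ∑ a, π (a, y.1, y.2))
        - entFun π - entFun (fun c : γ => ∑ a, ∑ b, π (a, b, c))
      = ∑ z, π z * (Real.logb 2 (π z) - Real.logb 2 (q z)) := by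
    unfold entFun
    rw [← hS1, ← hS2, ← hS3]
    have hpt : ∀ z : α × β × γ, π z * (Real.logb 2 (π z) - Real.logb 2 (q z))
        = π z * Real.logb 2 (π z) + π z * Real.logb 2 (∑ a, ∑ b, π (a, b, z.2.2))
          - π z * Real.logb 2 (∑ b, π (z.1, b, z.2.2))
          - π z * Real.logb 2 (∑ a, π (a, z.2.1, z.2.2)) := by
      rintro ⟨a, b, c⟩
      rcases eq_or_lt_of_le (h0 (a, b, c)) with hz0 | hzpos
      · rw [← hz0]; ring
      · have hA : 0 < ∑ b', π (a, b', c) :=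
          lt_of_lt_of_le hzpos (Finset.single_le_sum (fun b' _ => h0 (a, b', c)) (Finset.mem_univ b))
        have hB : 0 < ∑ a', π (a', b, c) :=
          lt_of_lt_of_le hzpos (Finset.single_le_sum (fun a' _ => h0 (a', b, c)) (Finset.mem_univ a))
        have hC : 0 < ∑ a', ∑ b', π (a', b', c) :=
          lt_of_lt_of_le hA (Finset.single_le_sum (fun a' _ => hmAC0 a' c) (Finset.mem_univ a))
        have hqv : q (a, b, c)
            = (∑ b', π (a, b', c)) * (∑ a', π (a', b, c)) / (∑ a', ∑ b', π (a', b', c)) := by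
          rw [hqpt, if_neg (ne_of_gt hC)]
        rw [hqv, Real.logb_div (ne_of_gt (mul_pos hA hB)) (ne_of_gt hC),
          Real.logb_mul (ne_of_gt hA) (ne_of_gt hB)]
        ring
    rw [Finset.sum_congr rfl fun z _ => hpt z]
    rw [Finset.sum_sub_distrib, Finset.sum_sub_distrib, Finset.sum_add_distrib]
    ring
  rw [hgoal]
  exact gibbs π q h0 hq0 habs hsumq

lemma CMI_nonneg (p : Ω → ℝ) (hp0 : ∀ ω, 0 ≤ p ω) (hp1 : ∑ ω, p ω = 1)
    (A : Ω → α) (B : Ω → β) (C : Ω → γ) : 0 ≤ CMI p A B C := by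
  have hAC : Hent p (fun ω => (A ω, C ω))
      = entFun (fun y : α × γ => ∑ b, distOf p (fun ω => (A ω, B ω, C ω)) (y.1, b, y.2)) := by
    unfold Hent
    congr 1
    funext y
    obtain ⟨a, c⟩ := y
    exact distOf_marg12 p A B C a c
  have hBC : Hent p (fun ω => (B ω, C ω))
      = entFun (fun y : β × γ => ∑ a, distOf p (fun ω => (A ω, B ω, C ω)) (a, y.1, y.2)) := by
    unfold Hent
    congr 1
    funext y
    obtain ⟨b, c⟩ := y
    exact distOf_marg21 p A B C b c
  have hC : Hent p C
      = entFun (fun c : γ => ∑ a, ∑ b, distOf p (fun ω => (A ω, B ω, C ω)) (a, b, c)) := by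
    unfold Hent
    congr 1
    funext c
    exact distOf_marg3 p A B C c
  unfold CMI
  rw [hAC, hBC, hC]
  exact cmi_core (distOf p (fun ω => (A ω, B ω, C ω)))
    (fun z => distOf_nonneg p hp0 _ z) (by rw [sum_distOf, hp1])

end cminonneg
section lift
variable {Ω α : Type} [Fintype Ω] [Fintype α] {n : ℕ}

/-- time-sharing weight -/
def cwt (l : ℝ) (v : Fin (n+1)) (u : Fin n) : ℝ :=
  if v = 0 then 1 - l else if v = Fin.succ u then l else 0

lemma cwt_nonneg {l : ℝ} (hl0 : 0 ≤ l) (hl1 : l ≤ 1) (v : Fin (n+1)) (u : Fin n) :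
    0 ≤ cwt l v u := by
  unfold cwt
  split
  · linarith
  · split
    · exact hl0
    · exact le_refl 0

lemma sum_cwt (l : ℝ) (u : Fin n) : ∑ v, cwt l v u = 1 := by
  unfold cwt
  rw [Fin.sum_univ_succ]
  simp [Fin.succ_ne_zero, Fin.succ_inj]

lemma Hent_lift0 (p : Ω → ℝ) (U : Ω → Fin n) (l : ℝ) (A : Ω → α) :
    Hent (fun z : Ω × Fin (n+1) => cwt l z.2 (U z.1) * p z.1) (fun z => A z.1)
      = Hent p A := by
  unfold Hent
  congr 1
  funext a
  unfold distOf
  rw [Fintype.sum_prod_type]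
  refine Finset.sum_congr rfl fun ω _ => ?_
  by_cases h : A ω = a
  · simp only [h, if_pos rfl, if_true]
    rw [← Finset.sum_mul, sum_cwt, one_mul]
  · simp [h]

lemma Hent_lift (p : Ω → ℝ) (hp0 : ∀ ω, 0 ≤ p ω) (hp1 : ∑ ω, p ω = 1)
    (U : Ω → Fin n) (l : ℝ) (hl0 : 0 ≤ l) (hl1 : l ≤ 1) (A : Ω → α) :
    Hent (fun z : Ω × Fin (n+1) => cwt l z.2 (U z.1) * p z.1) (fun z => (A z.1, z.2))
      = (1 - l) * Hent p A + l * Hent p (fun ω => (A ω, U ω))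
        + (-((1 - l) * Real.logb 2 (1 - l)) + -(l * Real.logb 2 l)) := by
  have hsA : ∑ a, distOf p A a = 1 := by rw [sum_distOf, hp1]
  have hsAU : ∑ y, distOf p (fun ω => (A ω, U ω)) y = 1 := by rw [sum_distOf, hp1]
  have hr0 : ∀ a : α,
      distOf (fun z : Ω × Fin (n+1) => cwt l z.2 (U z.1) * p z.1) (fun z => (A z.1, z.2)) (a, 0)
        = (1 - l) * distOf p A a := by
    intro a
    unfold distOf
    rw [Fintype.sum_prod_type, Finset.mul_sum]
    refine Finset.sum_congr rfl fun ω _ => ?_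
    dsimp only
    by_cases h : A ω = a <;>
      simp [Prod.ext_iff, h, cwt]
  have hrs : ∀ (a : α) (u : Fin n),
      distOf (fun z : Ω × Fin (n+1) => cwt l z.2 (U z.1) * p z.1) (fun z => (A z.1, z.2))
          (a, Fin.succ u)
        = l * distOf p (fun ω => (A ω, U ω)) (a, u) := by
    intro a u
    unfold distOf
    rw [Fintype.sum_prod_type, Finset.mul_sum]
    refine Finset.sum_congr rfl fun ω _ => ?_
    dsimp only
    by_cases h1 : A ω = a
    · by_cases h2 : U ω = u <;>
        simp [Prod.ext_iff, h1, h2, cwt, Fin.succ_ne_zero, Fin.succ_inj, eq_comm]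
    · simp [Prod.ext_iff, h1]
  set D := distOf (fun z : Ω × Fin (n+1) => cwt l z.2 (U z.1) * p z.1)
      (fun z => (A z.1, z.2)) with hD
  set dA := distOf p A with hdA
  set dAU := distOf p (fun ω => (A ω, U ω)) with hdAU
  have hdA0 : ∀ a, 0 ≤ dA a := fun a => distOf_nonneg p hp0 A a
  have hdAU0 : ∀ y, 0 ≤ dAU y := fun y => distOf_nonneg p hp0 _ y
  have h2 : ∑ y : Fin n × α, dAU (y.2, y.1) = 1 := by
    rw [Fintype.sum_equiv (Equiv.prodComm (Fin n) α)
      (fun y => dAU (y.2, y.1)) (fun y => dAU y) (fun y => rfl)]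
    exact hsAU
  have h3 : ∑ y : Fin n × α, dAU (y.2, y.1) * Real.logb 2 (dAU (y.2, y.1))
      = ∑ z : α × Fin n, dAU z * Real.logb 2 (dAU z) :=
    Fintype.sum_equiv (Equiv.prodComm (Fin n) α)
      (fun y => dAU (y.2, y.1) * Real.logb 2 (dAU (y.2, y.1)))
      (fun y => dAU y * Real.logb 2 (dAU y)) (fun y => rfl)
  have hA0 : ∑ a, D (a, 0) * Real.logb 2 (D (a, 0))
      = (1 - l) * ∑ a, dA a * Real.logb 2 (dA a) + ((1 - l) * Real.logb 2 (1 - l)) * 1 := by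
    rw [Finset.sum_congr rfl fun a (_ : a ∈ Finset.univ) => by rw [hr0 a]]
    rw [sum_scale_logb (1 - l) (by linarith) dA hdA0, hsA]
  have hAs : ∑ u : Fin n, ∑ a, D (a, Fin.succ u) * Real.logb 2 (D (a, Fin.succ u))
      = l * ∑ z : α × Fin n, dAU z * Real.logb 2 (dAU z) + (l * Real.logb 2 l) * 1 := by
    have step : ∑ u : Fin n, ∑ a, D (a, Fin.succ u) * Real.logb 2 (D (a, Fin.succ u))
        = ∑ y : Fin n × α, (l * dAU (y.2, y.1)) * Real.logb 2 (l * dAU (y.2, y.1)) := by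
      rw [Fintype.sum_prod_type]
      refine Finset.sum_congr rfl fun u _ => Finset.sum_congr rfl fun a _ => by rw [hrs a u]
    rw [step, sum_scale_logb l hl0 (fun y : Fin n × α => dAU (y.2, y.1)) (fun y => hdAU0 _),
      h2, h3]
  unfold Hent entFun
  rw [← hdA, ← hdAU, ← hD]
  rw [Fintype.sum_prod_type, Finset.sum_comm, Fin.sum_univ_succ]
  rw [hA0, hAs]
  ring

end lift
section relabel
variable {Ω α β γ : Type} [Fintype Ω] [Fintype α] [Fintype β] [Fintype γ]

lemma Hent_swap (p : Ω → ℝ) (A : Ω → α) (B : Ω → β) :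
    Hent p (fun ω => (A ω, B ω)) = Hent p (fun ω => (B ω, A ω)) :=
  Hent_comp_inj p _ _ (fun t => (t.2, t.1))
    (fun s t h => by
      obtain ⟨s1, s2⟩ := s; obtain ⟨t1, t2⟩ := t
      simp only [Prod.mk.injEq] at h ⊢
      exact ⟨h.2, h.1⟩)
    (fun ω => rfl)

lemma Hent_rot1 (p : Ω → ℝ) (A : Ω → α) (B : Ω → β) (C : Ω → γ) :
    Hent p (fun ω => ((A ω, B ω), C ω)) = Hent p (fun ω => (C ω, B ω, A ω)) :=
  Hent_comp_inj p (fun ω => (C ω, B ω, A ω)) (fun ω => ((A ω, B ω), C ω))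
    (fun t : γ × β × α => ((t.2.2, t.2.1), t.1))
    (fun s t h => by
      obtain ⟨s1, s2, s3⟩ := s; obtain ⟨t1, t2, t3⟩ := t
      simp only [Prod.mk.injEq] at h ⊢
      exact ⟨h.2, h.1.2, h.1.1⟩)
    (fun ω => rfl)

lemma Hent_rot2 (p : Ω → ℝ) (A : Ω → α) (B : Ω → β) (C : Ω → γ) :
    Hent p (fun ω => ((A ω, B ω), C ω)) = Hent p (fun ω => (C ω, A ω, B ω)) :=
  Hent_comp_inj p (fun ω => (C ω, A ω, B ω)) (fun ω => ((A ω, B ω), C ω))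
    (fun t : γ × α × β => ((t.2.1, t.2.2), t.1))
    (fun s t h => by
      obtain ⟨s1, s2, s3⟩ := s; obtain ⟨t1, t2, t3⟩ := t
      simp only [Prod.mk.injEq] at h ⊢
      exact ⟨h.2, h.1.1, h.1.2⟩)
    (fun ω => rfl)

lemma Hent_dup (p : Ω → ℝ) (A : Ω → α) (B : Ω → β) :
    Hent p (fun ω => ((A ω, B ω), A ω)) = Hent p (fun ω => (A ω, B ω)) :=
  Hent_comp_inj p _ _ (fun t : α × β => (t, t.1))
    (fun s t h => by
      simp only [Prod.mk.injEq] at h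
      exact h.1)
    (fun ω => rfl)

end relabel

section triple
variable {Wt Ut Xt : Type} [Fintype Wt] [Fintype Ut] [Fintype Xt]

lemma distOf_t1 (P : Wt × Ut × Xt → ℝ) (w : Wt) (x : Xt) (u : Ut) :
    distOf P (fun a => (a.1, a.2.2, a.2.1)) (w, x, u) = P (w, u, x) :=
  distOf_inj_apply P (fun a => (a.1, a.2.2, a.2.1))
    (fun s t h => by
      obtain ⟨s1, s2, s3⟩ := s; obtain ⟨t1, t2, t3⟩ := t
      simp only [Prod.mk.injEq] at h ⊢
      exact ⟨h.1, h.2.2, h.2.1⟩)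
    (w, u, x)

lemma distOf_t2 (P : Wt × Ut × Xt → ℝ) (u : Ut) :
    distOf P (fun a => a.2.1) u = ∑ w, ∑ x, P (w, u, x) := by
  simp only [distOf, Fintype.sum_prod_type]
  refine Finset.sum_congr rfl fun w _ => ?_
  rw [Finset.sum_comm]
  refine Finset.sum_congr rfl fun x _ => ?_
  exact Eq.trans (Fintype.sum_eq_single u fun u' hu' => if_neg hu') (if_pos rfl)

lemma distOf_t3 (P : Wt × Ut × Xt → ℝ) (w : Wt) (u : Ut) :
    distOf P (fun a => (a.1, a.2.1)) (w, u) = ∑ x, P (w, u, x) := by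
  simp only [distOf, Fintype.sum_prod_type, Prod.mk.injEq]
  refine Eq.trans (Fintype.sum_eq_single w fun w' hw' =>
    Finset.sum_eq_zero fun u' _ => Finset.sum_eq_zero fun x' _ => if_neg fun h => hw' h.1) ?_
  refine Eq.trans (Fintype.sum_eq_single u fun u' hu' =>
    Finset.sum_eq_zero fun x' _ => if_neg fun h => hu' h.2) ?_
  exact Finset.sum_congr rfl fun x' _ => if_pos ⟨rfl, rfl⟩

lemma distOf_t4 (P : Wt × Ut × Xt → ℝ) (x : Xt) (u : Ut) :
    distOf P (fun a => (a.2.2, a.2.1)) (x, u) = ∑ w, P (w, u, x) := by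
  simp only [distOf, Fintype.sum_prod_type, Prod.mk.injEq]
  refine Finset.sum_congr rfl fun w' _ => ?_
  refine Eq.trans (Fintype.sum_eq_single u fun u' hu' =>
    Finset.sum_eq_zero fun x' _ => if_neg fun h => hu' h.2) ?_
  exact Eq.trans (Fintype.sum_eq_single x fun x' hx' => if_neg fun h => hx' h.1) (if_pos ⟨rfl, rfl⟩)

end triple

/-- **Appendix B.** The Csiszár–Körner region equals the `L1 = 0`
degraded-message-set region. -/
theorem ck_region_equiv {X Y1 Y2 : Type} [Fintype X] [Fintype Y1] [Fintype Y2]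
    (ch : BCChannel X Y1 Y2) :
    {r : ℝ × ℝ | 0 ≤ r.1 ∧ 0 ≤ r.2 ∧
      ∃ (kW kU : ℕ) (P : Fin kW × Fin kU × X → ℝ), IsPMF P ∧
        CondIndep P (fun a => a.1) (fun a => a.2.2) (fun a => a.2.1) ∧
        ∃ p : Fin kW × Fin kU × X × Y1 × Y2 → ℝ,
          (∀ w u x y1 y2, p (w, u, x, y1, y2) = P (w, u, x) * ch.Q x y1 y2) ∧
          r.1 ≤ MI p (fun ω => ω.1) (fun ω => ω.2.2.2.1) ∧
          r.1 ≤ MI p (fun ω => ω.1) (fun ω => ω.2.2.2.2) ∧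
          r.2 ≤ CMI p (fun ω => ω.2.1) (fun ω => ω.2.2.2.1) (fun ω => ω.1)
              - CMI p (fun ω => ω.2.1) (fun ω => ω.2.2.2.2) (fun ω => ω.1)} =
    {r : ℝ × ℝ | 0 ≤ r.1 ∧ 0 ≤ r.2 ∧
      ∃ (kW kU : ℕ) (P : Fin kW × Fin kU × X → ℝ), IsPMF P ∧
        CondIndep P (fun a => a.1) (fun a => a.2.2) (fun a => a.2.1) ∧
        ∃ p : Fin kW × Fin kU × X × Y1 × Y2 → ℝ,
          (∀ w u x y1 y2, p (w, u, x, y1, y2) = P (w, u, x) * ch.Q x y1 y2) ∧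
          r.1 ≤ MI p (fun ω => ω.1) (fun ω => ω.2.2.2.2) ∧
          r.2 ≤ CMI p (fun ω => ω.2.1) (fun ω => ω.2.2.2.1) (fun ω => ω.1)
              - CMI p (fun ω => ω.2.1) (fun ω => ω.2.2.2.2) (fun ω => ω.1) ∧
          r.1 + r.2 ≤ MI p (fun ω => (ω.1, ω.2.1)) (fun ω => ω.2.2.2.1)
              - CMI p (fun ω => ω.2.1) (fun ω => ω.2.2.2.2) (fun ω => ω.1)} := by
  ext r
  simp only [Set.mem_setOf_eq]
  constructor
  · rintro ⟨hr0, hr1, kW, kU, P, hP, hCI, p, hp, h1, h2, h3⟩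
    have hchain : MI p (fun ω => (ω.1, ω.2.1)) (fun ω => ω.2.2.2.1)
        = MI p (fun ω => ω.1) (fun ω => ω.2.2.2.1)
          + CMI p (fun ω => ω.2.1) (fun ω => ω.2.2.2.1) (fun ω => ω.1) :=
      MI_pair p _ _ _
    exact ⟨hr0, hr1, kW, kU, P, hP, hCI, p, hp, h2, h3, by linarith⟩
  · rintro ⟨hr0, hr1, kW, kU, P, hP, hCI, p, hp, h2, h3, h4⟩
    refine ⟨hr0, hr1, ?_⟩
    have hchain : MI p (fun ω => (ω.1, ω.2.1)) (fun ω => ω.2.2.2.1)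
        = MI p (fun ω => ω.1) (fun ω => ω.2.2.2.1)
          + CMI p (fun ω => ω.2.1) (fun ω => ω.2.2.2.1) (fun ω => ω.1) :=
      MI_pair p _ _ _
    by_cases hcase : r.1 ≤ MI p (fun ω => ω.1) (fun ω => ω.2.2.2.1)
    · exact ⟨kW, kU, P, hP, hCI, p, hp, hcase, h2, h3⟩
    push_neg at hcase
    -- basic facts about p
    have hp0 : ∀ ω, 0 ≤ p ω := by
      rintro ⟨w, u, x, y1, y2⟩
      rw [hp]
      exact mul_nonneg (hP.1 _) (ch.nonneg _ _ _)
    have hPsum : ∑ w, ∑ u, ∑ x, P (w, u, x) = 1 := by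
      rw [← hP.2]
      simp only [Fintype.sum_prod_type]
    have hin : ∀ w u x, (∑ y1, ∑ y2, p (w, u, x, y1, y2)) = P (w, u, x) := by
      intro w u x
      simp only [hp]
      calc ∑ y1, ∑ y2, P (w, u, x) * ch.Q x y1 y2
          = P (w, u, x) * ∑ y1, ∑ y2, ch.Q x y1 y2 := by
            rw [Finset.mul_sum]
            exact Finset.sum_congr rfl fun y1 _ => (Finset.mul_sum _ _ _).symm
        _ = P (w, u, x) := by rw [ch.sum_one, mul_one]
    have hp1 : ∑ ω, p ω = 1 := by
      simp only [Fintype.sum_prod_type]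
      refine Eq.trans (Finset.sum_congr rfl fun w _ => Finset.sum_congr rfl fun u _ =>
        Finset.sum_congr rfl fun x _ => hin w u x) hPsum
    -- abbreviations
    set m1 := MI p (fun ω => ω.1) (fun ω => ω.2.2.2.1) with hm1
    set m2 := MI p (fun ω => ω.1) (fun ω => ω.2.2.2.2) with hm2
    set c1 := CMI p (fun ω => ω.2.1) (fun ω => ω.2.2.2.1) (fun ω => ω.1) with hc1
    set c2 := CMI p (fun ω => ω.2.1) (fun ω => ω.2.2.2.2) (fun ω => ω.1) with hc2
    have hc2nn : 0 ≤ c2 := by rw [hc2]; exact CMI_nonneg p hp0 hp1 _ _ _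
    have h4' : r.1 + r.2 ≤ m1 + c1 - c2 := by linarith
    have hc1pos : 0 < c1 := by linarith
    set l := (r.1 - m1) / c1 with hl
    have hl0 : 0 ≤ l := by rw [hl]; exact div_nonneg (by linarith) (le_of_lt hc1pos)
    have hl1 : l ≤ 1 := by rw [hl, div_le_one hc1pos]; linarith
    have hlc1 : l * c1 = r.1 - m1 := by
      rw [hl]
      field_simp
    -- the new auxiliary distribution
    set e := (finProdFinEquiv.symm : Fin (kW * (kU + 1)) ≃ Fin kW × Fin (kU + 1)) with he
    set P' : Fin (kW * (kU + 1)) × Fin kU × X → ℝ :=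
      fun a => cwt l (e a.1).2 a.2.1 * P ((e a.1).1, a.2.1, a.2.2) with hP'
    set p' : Fin (kW * (kU + 1)) × Fin kU × X × Y1 × Y2 → ℝ :=
      fun ω => P' (ω.1, ω.2.1, ω.2.2.1) * ch.Q ω.2.2.1 ω.2.2.2.1 ω.2.2.2.2 with hp'
    set phat : (Fin kW × Fin kU × X × Y1 × Y2) × Fin (kU + 1) → ℝ :=
      fun z => cwt l z.2 z.1.2.1 * p z.1 with hphat
    set E : (Fin (kW * (kU + 1)) × Fin kU × X × Y1 × Y2)
        ≃ ((Fin kW × Fin kU × X × Y1 × Y2) × Fin (kU + 1)) :=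
      { toFun := fun ω => (((e ω.1).1, ω.2.1, ω.2.2.1, ω.2.2.2.1, ω.2.2.2.2), (e ω.1).2)
        invFun := fun z => (e.symm (z.1.1, z.2), z.1.2.1, z.1.2.2.1, z.1.2.2.2.1, z.1.2.2.2.2)
        left_inv := by rintro ⟨w', u, x, y1, y2⟩; simp
        right_inv := by rintro ⟨⟨w, u, x, y1, y2⟩, v⟩; simp } with hE
    have hpE : ∀ ω', p' ω' = phat (E ω') := by
      rintro ⟨w', u, x, y1, y2⟩
      show P' (w', u, x) * ch.Q x y1 y2 = cwt l (e w').2 u * p ((e w').1, u, x, y1, y2)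
      rw [hp, hP']
      ring
    -- reindexing helper
    have hre : ∀ f : Fin (kW * (kU + 1)) → ℝ,
        ∑ w', f w' = ∑ t : Fin kW × Fin (kU + 1), f (e.symm t) :=
      fun f => (Fintype.sum_equiv e.symm (fun t => f (e.symm t)) f (fun t => rfl)).symm
    have hP'pt : ∀ (t : Fin kW × Fin (kU + 1)) u x,
        P' (e.symm t, u, x) = cwt l t.2 u * P (t.1, u, x) := by
      intro t u x
      rw [hP']
      simp
    have hcollapse : ∀ (u : Fin kU) (g : X → ℝ),
        (∑ v, ∑ x, cwt l v u * g x) = ∑ x, g x := by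
      intro u g
      calc ∑ v, ∑ x, cwt l v u * g x
          = ∑ v, cwt l v u * ∑ x, g x :=
            Finset.sum_congr rfl fun v _ => (Finset.mul_sum _ _ _).symm
        _ = (∑ v, cwt l v u) * ∑ x, g x := (Finset.sum_mul _ _ _).symm
        _ = ∑ x, g x := by rw [sum_cwt, one_mul]
    have hcollapse1 : ∀ (u : Fin kU) (c : ℝ), (∑ v, cwt l v u * c) = c := by
      intro u c
      rw [← Finset.sum_mul, sum_cwt, one_mul]
    -- IsPMF P'
    have hP'0 : ∀ a, 0 ≤ P' a := by
      intro a
      rw [hP']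
      exact mul_nonneg (cwt_nonneg hl0 hl1 _ _) (hP.1 _)
    have hP'1 : ∑ a, P' a = 1 := by
      simp only [Fintype.sum_prod_type]
      rw [hre fun w' => ∑ u, ∑ x, P' (w', u, x)]
      rw [Fintype.sum_prod_type]
      calc ∑ w, ∑ v, ∑ u, ∑ x, P' (e.symm (w, v), u, x)
          = ∑ w, ∑ v, ∑ u, ∑ x, cwt l v u * P (w, u, x) :=
            Finset.sum_congr rfl fun w _ => Finset.sum_congr rfl fun v _ =>
              Finset.sum_congr rfl fun u _ => Finset.sum_congr rfl fun x _ =>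
                hP'pt (w, v) u x
        _ = ∑ w, ∑ u, ∑ x, P (w, u, x) := by
            refine Finset.sum_congr rfl fun w _ => ?_
            rw [Finset.sum_comm]
            exact Finset.sum_congr rfl fun u _ => hcollapse u fun x => P (w, u, x)
        _ = 1 := hPsum
    -- conditional independence for P'
    have hCI' : CondIndep P' (fun a => a.1) (fun a => a.2.2) (fun a => a.2.1) := by
      intro w' x u
      have hspec := hCI (e w').1 x u
      rw [distOf_t1, distOf_t2, distOf_t3, distOf_t4] at hspec
      rw [distOf_t1, distOf_t2, distOf_t3, distOf_t4]
      have hU2 : ∑ w'2, ∑ x2, P' (w'2, u, x2) = ∑ w, ∑ x2, P (w, u, x2) := by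
        rw [hre fun w'2 => ∑ x2, P' (w'2, u, x2), Fintype.sum_prod_type]
        calc ∑ w, ∑ v, ∑ x2, P' (e.symm (w, v), u, x2)
            = ∑ w, ∑ v, ∑ x2, cwt l v u * P (w, u, x2) :=
              Finset.sum_congr rfl fun w _ => Finset.sum_congr rfl fun v _ =>
                Finset.sum_congr rfl fun x2 _ => hP'pt (w, v) u x2
          _ = ∑ w, ∑ x2, P (w, u, x2) :=
              Finset.sum_congr rfl fun w _ => hcollapse u fun x2 => P (w, u, x2)
      have hX2 : ∑ w'2, P' (w'2, u, x) = ∑ w, P (w, u, x) := by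
        rw [hre fun w'2 => P' (w'2, u, x), Fintype.sum_prod_type]
        calc ∑ w, ∑ v, P' (e.symm (w, v), u, x)
            = ∑ w, ∑ v, cwt l v u * P (w, u, x) :=
              Finset.sum_congr rfl fun w _ => Finset.sum_congr rfl fun v _ =>
                hP'pt (w, v) u x
          _ = ∑ w, P (w, u, x) :=
              Finset.sum_congr rfl fun w _ => hcollapse1 u (P (w, u, x))
      have hW2 : ∑ x2, P' (w', u, x2)
          = cwt l (e w').2 u * ∑ x2, P ((e w').1, u, x2) := by
        rw [Finset.mul_sum]
        try rfl
        try exact Finset.sum_congr rfl fun x2 _ => by rw [hP']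
      have hpoint : P' (w', u, x) = cwt l (e w').2 u * P ((e w').1, u, x) := by rw [hP']
      rw [hU2, hX2, hW2, hpoint]
      linear_combination (cwt l (e w').2 u) * hspec
    -- entropy computations
    set E2 := -((1 - l) * Real.logb 2 (1 - l)) + -(l * Real.logb 2 l) with hE2
    have HW' : Hent p' (fun ω => ω.1)
        = (1 - l) * Hent p (fun ω => ω.1) + l * Hent p (fun ω => (ω.1, ω.2.1)) + E2 := by
      have s1 : Hent p' (fun ω' => ω'.1) = Hent p' (fun ω' => e ω'.1) :=
        Hent_comp_inj p' (fun ω' => e ω'.1) (fun ω' => ω'.1) e.symm e.symm.injective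
          (fun ω' => (e.symm_apply_apply ω'.1).symm)
      have s2 : Hent p' (fun ω' => e ω'.1) = Hent phat (fun z => (z.1.1, z.2)) :=
        Hent_reindex E phat p' hpE _ _ (fun ω' => rfl)
      rw [s1, s2, hE2]
      exact Hent_lift p hp0 hp1 (fun ω => ω.2.1) l hl0 hl1 (fun ω => ω.1)
    have HY1' : Hent p' (fun ω => ω.2.2.2.1) = Hent p (fun ω => ω.2.2.2.1) := by
      have s2 : Hent p' (fun ω' => ω'.2.2.2.1) = Hent phat (fun z => z.1.2.2.2.1) :=
        Hent_reindex E phat p' hpE _ _ (fun ω' => rfl)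
      rw [s2]
      exact Hent_lift0 p (fun ω => ω.2.1) l (fun ω => ω.2.2.2.1)
    have HY2' : Hent p' (fun ω => ω.2.2.2.2) = Hent p (fun ω => ω.2.2.2.2) := by
      have s2 : Hent p' (fun ω' => ω'.2.2.2.2) = Hent phat (fun z => z.1.2.2.2.2) :=
        Hent_reindex E phat p' hpE _ _ (fun ω' => rfl)
      rw [s2]
      exact Hent_lift0 p (fun ω => ω.2.1) l (fun ω => ω.2.2.2.2)
    have HWY1' : Hent p' (fun ω => (ω.1, ω.2.2.2.1))
        = (1 - l) * Hent p (fun ω => (ω.1, ω.2.2.2.1))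
          + l * Hent p (fun ω => ((ω.1, ω.2.2.2.1), ω.2.1)) + E2 := by
      have s1 : Hent p' (fun ω' => (ω'.1, ω'.2.2.2.1))
          = Hent p' (fun ω' => (((e ω'.1).1, ω'.2.2.2.1), (e ω'.1).2)) :=
        Hent_comp_inj p' _ _
          (fun t : (Fin kW × Y1) × Fin (kU + 1) => (e.symm (t.1.1, t.2), t.1.2))
          (fun s t h => by
            obtain ⟨⟨a1, b1⟩, v1⟩ := s; obtain ⟨⟨a2, b2⟩, v2⟩ := t
            simp only [Prod.mk.injEq] at h ⊢
            have h3 : ((a1, v1) : Fin kW × Fin (kU + 1)) = (a2, v2) := e.symm.injective h.1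
            simp only [Prod.mk.injEq] at h3
            exact ⟨⟨h3.1, h.2⟩, h3.2⟩)
          (fun ω' => by simp)
      have s2 : Hent p' (fun ω' => (((e ω'.1).1, ω'.2.2.2.1), (e ω'.1).2))
          = Hent phat (fun z => ((z.1.1, z.1.2.2.2.1), z.2)) :=
        Hent_reindex E phat p' hpE _ _ (fun ω' => rfl)
      rw [s1, s2, hE2]
      exact Hent_lift p hp0 hp1 (fun ω => ω.2.1) l hl0 hl1 (fun ω => (ω.1, ω.2.2.2.1))
    have HWY2' : Hent p' (fun ω => (ω.1, ω.2.2.2.2))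
        = (1 - l) * Hent p (fun ω => (ω.1, ω.2.2.2.2))
          + l * Hent p (fun ω => ((ω.1, ω.2.2.2.2), ω.2.1)) + E2 := by
      have s1 : Hent p' (fun ω' => (ω'.1, ω'.2.2.2.2))
          = Hent p' (fun ω' => (((e ω'.1).1, ω'.2.2.2.2), (e ω'.1).2)) :=
        Hent_comp_inj p' _ _
          (fun t : (Fin kW × Y2) × Fin (kU + 1) => (e.symm (t.1.1, t.2), t.1.2))
          (fun s t h => by
            obtain ⟨⟨a1, b1⟩, v1⟩ := s; obtain ⟨⟨a2, b2⟩, v2⟩ := t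
            simp only [Prod.mk.injEq] at h ⊢
            have h3 : ((a1, v1) : Fin kW × Fin (kU + 1)) = (a2, v2) := e.symm.injective h.1
            simp only [Prod.mk.injEq] at h3
            exact ⟨⟨h3.1, h.2⟩, h3.2⟩)
          (fun ω' => by simp)
      have s2 : Hent p' (fun ω' => (((e ω'.1).1, ω'.2.2.2.2), (e ω'.1).2))
          = Hent phat (fun z => ((z.1.1, z.1.2.2.2.2), z.2)) :=
        Hent_reindex E phat p' hpE _ _ (fun ω' => rfl)
      rw [s1, s2, hE2]
      exact Hent_lift p hp0 hp1 (fun ω => ω.2.1) l hl0 hl1 (fun ω => (ω.1, ω.2.2.2.2))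
    have HUW' : Hent p' (fun ω => (ω.2.1, ω.1))
        = (1 - l) * Hent p (fun ω => (ω.2.1, ω.1))
          + l * Hent p (fun ω => ((ω.2.1, ω.1), ω.2.1)) + E2 := by
      have s1 : Hent p' (fun ω' => (ω'.2.1, ω'.1))
          = Hent p' (fun ω' => ((ω'.2.1, (e ω'.1).1), (e ω'.1).2)) :=
        Hent_comp_inj p' _ _
          (fun t : (Fin kU × Fin kW) × Fin (kU + 1) => (t.1.1, e.symm (t.1.2, t.2)))
          (fun s t h => by
            obtain ⟨⟨a1, b1⟩, v1⟩ := s; obtain ⟨⟨a2, b2⟩, v2⟩ := t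
            simp only [Prod.mk.injEq] at h ⊢
            have h3 : ((b1, v1) : Fin kW × Fin (kU + 1)) = (b2, v2) := e.symm.injective h.2
            simp only [Prod.mk.injEq] at h3
            exact ⟨⟨h.1, h3.1⟩, h3.2⟩)
          (fun ω' => by simp)
      have s2 : Hent p' (fun ω' => ((ω'.2.1, (e ω'.1).1), (e ω'.1).2))
          = Hent phat (fun z => ((z.1.2.1, z.1.1), z.2)) :=
        Hent_reindex E phat p' hpE _ _ (fun ω' => rfl)
      rw [s1, s2, hE2]
      exact Hent_lift p hp0 hp1 (fun ω => ω.2.1) l hl0 hl1 (fun ω => (ω.2.1, ω.1))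
    have HY1W' : Hent p' (fun ω => (ω.2.2.2.1, ω.1))
        = (1 - l) * Hent p (fun ω => (ω.2.2.2.1, ω.1))
          + l * Hent p (fun ω => ((ω.2.2.2.1, ω.1), ω.2.1)) + E2 := by
      have s1 : Hent p' (fun ω' => (ω'.2.2.2.1, ω'.1))
          = Hent p' (fun ω' => ((ω'.2.2.2.1, (e ω'.1).1), (e ω'.1).2)) :=
        Hent_comp_inj p' _ _
          (fun t : (Y1 × Fin kW) × Fin (kU + 1) => (t.1.1, e.symm (t.1.2, t.2)))
          (fun s t h => by
            obtain ⟨⟨a1, b1⟩, v1⟩ := s; obtain ⟨⟨a2, b2⟩, v2⟩ := t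
            simp only [Prod.mk.injEq] at h ⊢
            have h3 : ((b1, v1) : Fin kW × Fin (kU + 1)) = (b2, v2) := e.symm.injective h.2
            simp only [Prod.mk.injEq] at h3
            exact ⟨⟨h.1, h3.1⟩, h3.2⟩)
          (fun ω' => by simp)
      have s2 : Hent p' (fun ω' => ((ω'.2.2.2.1, (e ω'.1).1), (e ω'.1).2))
          = Hent phat (fun z => ((z.1.2.2.2.1, z.1.1), z.2)) :=
        Hent_reindex E phat p' hpE _ _ (fun ω' => rfl)
      rw [s1, s2, hE2]
      exact Hent_lift p hp0 hp1 (fun ω => ω.2.1) l hl0 hl1 (fun ω => (ω.2.2.2.1, ω.1))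
    have HY2W' : Hent p' (fun ω => (ω.2.2.2.2, ω.1))
        = (1 - l) * Hent p (fun ω => (ω.2.2.2.2, ω.1))
          + l * Hent p (fun ω => ((ω.2.2.2.2, ω.1), ω.2.1)) + E2 := by
      have s1 : Hent p' (fun ω' => (ω'.2.2.2.2, ω'.1))
          = Hent p' (fun ω' => ((ω'.2.2.2.2, (e ω'.1).1), (e ω'.1).2)) :=
        Hent_comp_inj p' _ _
          (fun t : (Y2 × Fin kW) × Fin (kU + 1) => (t.1.1, e.symm (t.1.2, t.2)))
          (fun s t h => by
            obtain ⟨⟨a1, b1⟩, v1⟩ := s; obtain ⟨⟨a2, b2⟩, v2⟩ := t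
            simp only [Prod.mk.injEq] at h ⊢
            have h3 : ((b1, v1) : Fin kW × Fin (kU + 1)) = (b2, v2) := e.symm.injective h.2
            simp only [Prod.mk.injEq] at h3
            exact ⟨⟨h.1, h3.1⟩, h3.2⟩)
          (fun ω' => by simp)
      have s2 : Hent p' (fun ω' => ((ω'.2.2.2.2, (e ω'.1).1), (e ω'.1).2))
          = Hent phat (fun z => ((z.1.2.2.2.2, z.1.1), z.2)) :=
        Hent_reindex E phat p' hpE _ _ (fun ω' => rfl)
      rw [s1, s2, hE2]
      exact Hent_lift p hp0 hp1 (fun ω => ω.2.1) l hl0 hl1 (fun ω => (ω.2.2.2.2, ω.1))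
    have HUY1W' : Hent p' (fun ω => (ω.2.1, ω.2.2.2.1, ω.1))
        = (1 - l) * Hent p (fun ω => (ω.2.1, ω.2.2.2.1, ω.1))
          + l * Hent p (fun ω => ((ω.2.1, ω.2.2.2.1, ω.1), ω.2.1)) + E2 := by
      have s1 : Hent p' (fun ω' => (ω'.2.1, ω'.2.2.2.1, ω'.1))
          = Hent p' (fun ω' => ((ω'.2.1, ω'.2.2.2.1, (e ω'.1).1), (e ω'.1).2)) :=
        Hent_comp_inj p' _ _
          (fun t : (Fin kU × Y1 × Fin kW) × Fin (kU + 1) =>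
            (t.1.1, t.1.2.1, e.symm (t.1.2.2, t.2)))
          (fun s t h => by
            obtain ⟨⟨a1, b1, c1'⟩, v1⟩ := s; obtain ⟨⟨a2, b2, c2'⟩, v2⟩ := t
            simp only [Prod.mk.injEq] at h ⊢
            have h3 : ((c1', v1) : Fin kW × Fin (kU + 1)) = (c2', v2) :=
              e.symm.injective h.2.2
            simp only [Prod.mk.injEq] at h3
            exact ⟨⟨h.1, h.2.1, h3.1⟩, h3.2⟩)
          (fun ω' => by simp)
      have s2 : Hent p' (fun ω' => ((ω'.2.1, ω'.2.2.2.1, (e ω'.1).1), (e ω'.1).2))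
          = Hent phat (fun z => ((z.1.2.1, z.1.2.2.2.1, z.1.1), z.2)) :=
        Hent_reindex E phat p' hpE _ _ (fun ω' => rfl)
      rw [s1, s2, hE2]
      exact Hent_lift p hp0 hp1 (fun ω => ω.2.1) l hl0 hl1
        (fun ω => (ω.2.1, ω.2.2.2.1, ω.1))
    have HUY2W' : Hent p' (fun ω => (ω.2.1, ω.2.2.2.2, ω.1))
        = (1 - l) * Hent p (fun ω => (ω.2.1, ω.2.2.2.2, ω.1))
          + l * Hent p (fun ω => ((ω.2.1, ω.2.2.2.2, ω.1), ω.2.1)) + E2 := by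
      have s1 : Hent p' (fun ω' => (ω'.2.1, ω'.2.2.2.2, ω'.1))
          = Hent p' (fun ω' => ((ω'.2.1, ω'.2.2.2.2, (e ω'.1).1), (e ω'.1).2)) :=
        Hent_comp_inj p' _ _
          (fun t : (Fin kU × Y2 × Fin kW) × Fin (kU + 1) =>
            (t.1.1, t.1.2.1, e.symm (t.1.2.2, t.2)))
          (fun s t h => by
            obtain ⟨⟨a1, b1, c1'⟩, v1⟩ := s; obtain ⟨⟨a2, b2, c2'⟩, v2⟩ := t
            simp only [Prod.mk.injEq] at h ⊢
            have h3 : ((c1', v1) : Fin kW × Fin (kU + 1)) = (c2', v2) :=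
              e.symm.injective h.2.2
            simp only [Prod.mk.injEq] at h3
            exact ⟨⟨h.1, h.2.1, h3.1⟩, h3.2⟩)
          (fun ω' => by simp)
      have s2 : Hent p' (fun ω' => ((ω'.2.1, ω'.2.2.2.2, (e ω'.1).1), (e ω'.1).2))
          = Hent phat (fun z => ((z.1.2.1, z.1.2.2.2.2, z.1.1), z.2)) :=
        Hent_reindex E phat p' hpE _ _ (fun ω' => rfl)
      rw [s1, s2, hE2]
      exact Hent_lift p hp0 hp1 (fun ω => ω.2.1) l hl0 hl1
        (fun ω => (ω.2.1, ω.2.2.2.2, ω.1))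
    -- relabelings on the base space
    have rel1 : Hent p (fun ω => (ω.1, ω.2.1)) = Hent p (fun ω => (ω.2.1, ω.1)) :=
      Hent_swap p _ _
    have rel2 : Hent p (fun ω => (ω.1, ω.2.2.2.1)) = Hent p (fun ω => (ω.2.2.2.1, ω.1)) :=
      Hent_swap p _ _
    have rel2b : Hent p (fun ω => (ω.1, ω.2.2.2.2)) = Hent p (fun ω => (ω.2.2.2.2, ω.1)) :=
      Hent_swap p _ _
    have rel3 : Hent p (fun ω => ((ω.1, ω.2.2.2.1), ω.2.1))
        = Hent p (fun ω => (ω.2.1, ω.2.2.2.1, ω.1)) := Hent_rot1 p _ _ _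
    have rel3b : Hent p (fun ω => ((ω.1, ω.2.2.2.2), ω.2.1))
        = Hent p (fun ω => (ω.2.1, ω.2.2.2.2, ω.1)) := Hent_rot1 p _ _ _
    have rel4 : Hent p (fun ω => ((ω.2.1, ω.1), ω.2.1)) = Hent p (fun ω => (ω.2.1, ω.1)) :=
      Hent_dup p _ _
    have rel5 : Hent p (fun ω => ((ω.2.2.2.1, ω.1), ω.2.1))
        = Hent p (fun ω => (ω.2.1, ω.2.2.2.1, ω.1)) := Hent_rot2 p _ _ _
    have rel5b : Hent p (fun ω => ((ω.2.2.2.2, ω.1), ω.2.1))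
        = Hent p (fun ω => (ω.2.1, ω.2.2.2.2, ω.1)) := Hent_rot2 p _ _ _
    have rel6 : Hent p (fun ω => ((ω.2.1, ω.2.2.2.1, ω.1), ω.2.1))
        = Hent p (fun ω => (ω.2.1, ω.2.2.2.1, ω.1)) := Hent_dup p _ _
    have rel6b : Hent p (fun ω => ((ω.2.1, ω.2.2.2.2, ω.1), ω.2.1))
        = Hent p (fun ω => (ω.2.1, ω.2.2.2.2, ω.1)) := Hent_dup p _ _
    -- mutual information identities
    have hM1' : MI p' (fun ω => ω.1) (fun ω => ω.2.2.2.1) = m1 + l * c1 := by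
      rw [hm1, hc1]
      show Hent p' (fun ω => ω.1) + Hent p' (fun ω => ω.2.2.2.1)
          - Hent p' (fun ω => (ω.1, ω.2.2.2.1))
        = (Hent p (fun ω => ω.1) + Hent p (fun ω => ω.2.2.2.1)
            - Hent p (fun ω => (ω.1, ω.2.2.2.1)))
          + l * (Hent p (fun ω => (ω.2.1, ω.1)) + Hent p (fun ω => (ω.2.2.2.1, ω.1))
            - Hent p (fun ω => (ω.2.1, ω.2.2.2.1, ω.1)) - Hent p (fun ω => ω.1))
      rw [HW', HY1', HWY1', rel1, rel2, rel3]
      ring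
    have hM2' : MI p' (fun ω => ω.1) (fun ω => ω.2.2.2.2) = m2 + l * c2 := by
      rw [hm2, hc2]
      show Hent p' (fun ω => ω.1) + Hent p' (fun ω => ω.2.2.2.2)
          - Hent p' (fun ω => (ω.1, ω.2.2.2.2))
        = (Hent p (fun ω => ω.1) + Hent p (fun ω => ω.2.2.2.2)
            - Hent p (fun ω => (ω.1, ω.2.2.2.2)))
          + l * (Hent p (fun ω => (ω.2.1, ω.1)) + Hent p (fun ω => (ω.2.2.2.2, ω.1))
            - Hent p (fun ω => (ω.2.1, ω.2.2.2.2, ω.1)) - Hent p (fun ω => ω.1))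
      rw [HW', HY2', HWY2', rel1, rel2b, rel3b]
      ring
    have hC1' : CMI p' (fun ω => ω.2.1) (fun ω => ω.2.2.2.1) (fun ω => ω.1)
        = (1 - l) * c1 := by
      rw [hc1]
      show Hent p' (fun ω => (ω.2.1, ω.1)) + Hent p' (fun ω => (ω.2.2.2.1, ω.1))
          - Hent p' (fun ω => (ω.2.1, ω.2.2.2.1, ω.1)) - Hent p' (fun ω => ω.1)
        = (1 - l) * (Hent p (fun ω => (ω.2.1, ω.1)) + Hent p (fun ω => (ω.2.2.2.1, ω.1))
            - Hent p (fun ω => (ω.2.1, ω.2.2.2.1, ω.1)) - Hent p (fun ω => ω.1))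
      rw [HUW', HY1W', HUY1W', HW', rel1, rel4, rel5, rel6]
      ring
    have hC2' : CMI p' (fun ω => ω.2.1) (fun ω => ω.2.2.2.2) (fun ω => ω.1)
        = (1 - l) * c2 := by
      rw [hc2]
      show Hent p' (fun ω => (ω.2.1, ω.1)) + Hent p' (fun ω => (ω.2.2.2.2, ω.1))
          - Hent p' (fun ω => (ω.2.1, ω.2.2.2.2, ω.1)) - Hent p' (fun ω => ω.1)
        = (1 - l) * (Hent p (fun ω => (ω.2.1, ω.1)) + Hent p (fun ω => (ω.2.2.2.2, ω.1))
            - Hent p (fun ω => (ω.2.1, ω.2.2.2.2, ω.1)) - Hent p (fun ω => ω.1))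
      rw [HUW', HY2W', HUY2W', HW', rel1, rel4, rel5b, rel6b]
      ring
    -- final assembly
    refine ⟨kW * (kU + 1), kU, P', ⟨hP'0, hP'1⟩, hCI', p', fun w u x y1 y2 => rfl, ?_, ?_, ?_⟩
    · rw [hM1']
      linarith
    · rw [hM2']
      have : 0 ≤ l * c2 := mul_nonneg hl0 hc2nn
      linarith
    · rw [hC1', hC2']
      have hx1 : (1 - l) * c1 = c1 - l * c1 := by ring
      have hx2 : (1 - l) * c2 = c2 - l * c2 := by ring
      have hx3 : 0 ≤ l * c2 := mul_nonneg hl0 hc2nn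
      linarith
end
end

section
/- Equivalence of the no-leakage-constraint SD-BC region with the Gelfand–Pinsker region (Section 4.4.1). Fix finite alphabets 𝒳, 𝒴₁, 𝒴₂, a function f : 𝒳 → 𝒴₁ and a stochastic kernel Q_{Y₂|X}; for any joint PMF of auxiliaries with X, let Y₁ = f(X) and let Y₂ be generated from X through Q_{Y₂|X} conditionally independently of the auxiliaries given X. Define region A as the union, over all finite sets 𝒲, 𝒱 and joint PMFs P_{W,V,X}, of the sets {(R₁,R₂) ∈ ℝ₊² : R₁ ≤ H(Y₁); R₂ ≤ I(W,V;Y₂); R₁+R₂ ≤ H(Y₁|W,V) + I(V;Y₂|W) + min{I(W;Y₁), I(W;Y₂)}}. Define region B as the union, over all finite sets 𝒱 and joint PMFs P_{V,X}, of the sets {(R₁,R₂) ∈ ℝ₊² : R₁ ≤ H(Y₁); R₂ ≤ I(V;Y₂); R₁+R₂ ≤ H(Y₁|V) + I(V;Y₂)}. Then A = B. -/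
open scoped Classical BigOperators

noncomputable section

lemma Hent_equiv {Ω Ω' α : Type} [Fintype Ω] [Fintype Ω'] [Fintype α]
    (e : Ω' ≃ Ω) (p : Ω → ℝ) (A : Ω → α) :
    Hent (fun ω' => p (e ω')) (fun ω' => A (e ω')) = Hent p A := by
  have h : distOf (fun ω' => p (e ω')) (fun ω' => A (e ω')) = distOf p A := by
    funext a
    exact Equiv.sum_comp e (fun ω => if A ω = a then p ω else 0)
  unfold Hent
  rw [h]

lemma Hent_comp_inj_s18 {Ω α β : Type} [Fintype Ω] [Fintype α] [Fintype β]
    (p : Ω → ℝ) (A : Ω → α) (g : α → β) (hg : Function.Injective g) :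
    Hent p (fun ω => g (A ω)) = Hent p A := by
  unfold Hent entFun
  congr 1
  have hzero : ∀ b : β, b ∉ Finset.univ.image g →
      distOf p (fun ω => g (A ω)) b = 0 := by
    intro b hb
    refine Finset.sum_eq_zero fun ω _ => if_neg fun h => hb ?_
    exact Finset.mem_image.mpr ⟨A ω, Finset.mem_univ _, h⟩
  have h1 : ∑ b : β, distOf p (fun ω => g (A ω)) b * Real.logb 2 (distOf p (fun ω => g (A ω)) b)
      = ∑ b ∈ Finset.univ.image g,
          distOf p (fun ω => g (A ω)) b * Real.logb 2 (distOf p (fun ω => g (A ω)) b) := by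
    refine (Finset.sum_subset (Finset.subset_univ _) ?_).symm
    intro b _ hb
    rw [hzero b hb]
    simp
  rw [h1, Finset.sum_image (fun a _ a' _ h => hg h)]
  refine Finset.sum_congr rfl fun a _ => ?_
  have h2 : distOf p (fun ω => g (A ω)) (g a) = distOf p A a := by
    refine Finset.sum_congr rfl fun ω _ => ?_
    simp [hg.eq_iff]
  rw [h2]

lemma Hent_const_fin1 {Ω : Type} [Fintype Ω] (p : Ω → ℝ) (hs : ∑ ω, p ω = 1) :
    Hent p (fun _ => (0 : Fin 1)) = 0 := by
  unfold Hent entFun distOf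
  rw [Fin.sum_univ_one]
  simp [hs]

/-- **Section 4.4.1.** The no-leakage-constraint semi-deterministic BC region
coincides with the Gelfand–Pinsker region. -/
theorem sd_gp_region_equiv {X Y1 Y2 : Type} [Fintype X] [Fintype Y1] [Fintype Y2]
    (f : X → Y1) (Q2 : X → Y2 → ℝ) (hQ2 : ∀ x, IsPMF (Q2 x)) :
    {r : ℝ × ℝ | 0 ≤ r.1 ∧ 0 ≤ r.2 ∧
      ∃ (kW kV : ℕ) (P : Fin kW × Fin kV × X → ℝ), IsPMF P ∧
        ∃ p : Fin kW × Fin kV × X × Y1 × Y2 → ℝ,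
          (∀ w v x y1 y2, p (w, v, x, y1, y2)
              = P (w, v, x) * ((if y1 = f x then (1 : ℝ) else 0) * Q2 x y2)) ∧
          r.1 ≤ Hent p (fun ω => ω.2.2.2.1) ∧
          r.2 ≤ MI p (fun ω => (ω.1, ω.2.1)) (fun ω => ω.2.2.2.2) ∧
          r.1 + r.2 ≤ CHent p (fun ω => ω.2.2.2.1) (fun ω => (ω.1, ω.2.1))
              + CMI p (fun ω => ω.2.1) (fun ω => ω.2.2.2.2) (fun ω => ω.1)
              + min (MI p (fun ω => ω.1) (fun ω => ω.2.2.2.1))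
                    (MI p (fun ω => ω.1) (fun ω => ω.2.2.2.2))} =
    {r : ℝ × ℝ | 0 ≤ r.1 ∧ 0 ≤ r.2 ∧
      ∃ (kV : ℕ) (P : Fin kV × X → ℝ), IsPMF P ∧
        ∃ p : Fin kV × X × Y1 × Y2 → ℝ,
          (∀ v x y1 y2, p (v, x, y1, y2)
              = P (v, x) * ((if y1 = f x then (1 : ℝ) else 0) * Q2 x y2)) ∧
          r.1 ≤ Hent p (fun ω => ω.2.2.1) ∧
          r.2 ≤ MI p (fun ω => ω.1) (fun ω => ω.2.2.2) ∧
          r.1 + r.2 ≤ CHent p (fun ω => ω.2.2.1) (fun ω => ω.1)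
              + MI p (fun ω => ω.1) (fun ω => ω.2.2.2)} := by
  ext r
  simp only [Set.mem_setOf_eq]
  constructor
  · -- A ⊆ B : merge W and V into a single auxiliary
    rintro ⟨h1, h2, kW, kV, P, hP, p, hp, hR1, hR2, hSum⟩
    refine ⟨h1, h2, kW * kV, ?_⟩
    set E := finProdFinEquiv (m := kW) (n := kV) with hE
    let e : Fin kW × Fin kV × X × Y1 × Y2 ≃ Fin (kW * kV) × X × Y1 × Y2 :=
      { toFun := fun ω => (E (ω.1, ω.2.1), ω.2.2)
        invFun := fun u => ((E.symm u.1).1, (E.symm u.1).2, u.2)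
        left_inv := fun ω => by simp
        right_inv := fun u => by simp }
    have he : ∀ ω, e ω = (E (ω.1, ω.2.1), ω.2.2) := fun ω => rfl
    have key : ∀ {α : Type} [Fintype α] (B : Fin (kW * kV) × X × Y1 × Y2 → α),
        Hent (fun u => p (e.symm u)) B = Hent p (fun ω => B (e ω)) := by
      intro α _ B
      simpa using Hent_equiv e.symm p (fun ω => B (e ω))
    -- relabeling equalities
    have hA : Hent p (fun ω : Fin kW × Fin kV × X × Y1 × Y2 => E (ω.1, ω.2.1))
        = Hent p (fun ω => (ω.1, ω.2.1)) :=
      Hent_comp_inj_s18 p (fun ω => (ω.1, ω.2.1)) E E.injective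
    have hB : Hent p (fun ω : Fin kW × Fin kV × X × Y1 × Y2 => (E (ω.1, ω.2.1), ω.2.2.2.2))
        = Hent p (fun ω => ((ω.1, ω.2.1), ω.2.2.2.2)) :=
      Hent_comp_inj_s18 p (fun ω => ((ω.1, ω.2.1), ω.2.2.2.2)) (Prod.map E id)
        (E.injective.prodMap Function.injective_id)
    have hC : Hent p (fun ω : Fin kW × Fin kV × X × Y1 × Y2 => (ω.2.2.2.1, E (ω.1, ω.2.1)))
        = Hent p (fun ω => (ω.2.2.2.1, (ω.1, ω.2.1))) :=
      Hent_comp_inj_s18 p (fun ω => (ω.2.2.2.1, (ω.1, ω.2.1))) (Prod.map id E)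
        (Function.injective_id.prodMap E.injective)
    have s1 : Hent p (fun ω : Fin kW × Fin kV × X × Y1 × Y2 => (ω.2.1, ω.1))
        = Hent p (fun ω => (ω.1, ω.2.1)) :=
      Hent_comp_inj_s18 p (fun ω => (ω.1, ω.2.1)) Prod.swap Prod.swap_injective
    have s2 : Hent p (fun ω : Fin kW × Fin kV × X × Y1 × Y2 => (ω.2.2.2.2, ω.1))
        = Hent p (fun ω => (ω.1, ω.2.2.2.2)) :=
      Hent_comp_inj_s18 p (fun ω => (ω.1, ω.2.2.2.2)) Prod.swap Prod.swap_injective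
    have hg3 : Function.Injective
        (fun z : Fin kV × Y2 × Fin kW => ((z.2.2, z.1), z.2.1)) := by
      intro a b h
      simp only [Prod.mk.injEq] at h
      exact Prod.ext h.1.2 (Prod.ext h.2 h.1.1)
    have s3 : Hent p (fun ω : Fin kW × Fin kV × X × Y1 × Y2 => ((ω.1, ω.2.1), ω.2.2.2.2))
        = Hent p (fun ω => (ω.2.1, ω.2.2.2.2, ω.1)) :=
      Hent_comp_inj_s18 p (fun ω => (ω.2.1, ω.2.2.2.2, ω.1))
        (fun z => ((z.2.2, z.1), z.2.1)) hg3
    refine ⟨fun z => P ((E.symm z.1).1, (E.symm z.1).2, z.2), ⟨fun z => hP.1 _, ?_⟩,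
      fun u => p (e.symm u), ?_, ?_, ?_, ?_⟩
    · -- new P is a pmf
      rw [Fintype.sum_prod_type, ← Equiv.sum_comp E
        (fun n => ∑ x, P ((E.symm n).1, (E.symm n).2, x))]
      simp only [Equiv.symm_apply_apply]
      rw [← hP.2]
      simp only [Fintype.sum_prod_type]
    · -- factorization
      intro v x y1 y2
      exact hp _ _ _ _ _
    · -- R1 bound
      rw [key]
      exact hR1
    · -- R2 bound
      simp only [MI, key, he] at hR2 ⊢
      rw [hA, hB]
      exact hR2
    · -- sum bound
      have hmin := min_le_right (MI p (fun ω => ω.1) (fun ω => ω.2.2.2.1))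
        (MI p (fun ω => ω.1) (fun ω => ω.2.2.2.2))
      simp only [MI, CMI, CHent, key, he] at hSum hmin ⊢
      rw [hA, hB, hC]
      linarith [s1, s2, s3, hSum, hmin]
  · -- B ⊆ A : take W trivial
    rintro ⟨h1, h2, kV, P, hP, p, hp, hR1, hR2, hSum⟩
    have hq : ∀ x, ∑ y2, Q2 x y2 = 1 := fun x => (hQ2 x).2
    have hsum : ∑ ω, p ω = 1 := by
      calc ∑ ω, p ω
          = ∑ v, ∑ x, ∑ y1, ∑ y2,
              P (v, x) * ((if y1 = f x then (1 : ℝ) else 0) * Q2 x y2) := by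
            simp only [Fintype.sum_prod_type]
            exact Finset.sum_congr rfl fun v _ => Finset.sum_congr rfl fun x _ =>
              Finset.sum_congr rfl fun y1 _ => Finset.sum_congr rfl fun y2 _ => hp v x y1 y2
        _ = ∑ v, ∑ x, P (v, x) := by
            refine Finset.sum_congr rfl fun v _ => Finset.sum_congr rfl fun x _ => ?_
            simp only [← Finset.mul_sum, hq, mul_one]
            simp [mul_ite, mul_one, mul_zero, Finset.sum_ite_eq']
        _ = 1 := by rw [← Fintype.sum_prod_type]; exact hP.2
    have hW0 : Hent p (fun _ : Fin kV × X × Y1 × Y2 => (0 : Fin 1)) = 0 :=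
      Hent_const_fin1 p hsum
    have keyB : ∀ {α : Type} [Fintype α] (B : Fin 1 × Fin kV × X × Y1 × Y2 → α),
        Hent (fun ω => p ω.2) B = Hent p (fun t => B ((0 : Fin 1), t)) := by
      intro α _ B
      unfold Hent
      congr 1
      funext a
      simp only [distOf]
      rw [Fintype.sum_prod_type, Fin.sum_univ_one]
    have hg0 : Function.Injective (fun v : Fin kV => ((0 : Fin 1), v)) := by
      intro a b h; simpa using h
    have hzl : ∀ {γ : Type} [Fintype γ] (A : Fin kV × X × Y1 × Y2 → γ),
        Hent p (fun t => ((0 : Fin 1), A t)) = Hent p A := by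
      intro γ _ A
      exact Hent_comp_inj_s18 p A (fun z => ((0 : Fin 1), z)) (fun a b h => by simpa using h)
    have hzr : ∀ {γ : Type} [Fintype γ] (A : Fin kV × X × Y1 × Y2 → γ),
        Hent p (fun t => (A t, (0 : Fin 1))) = Hent p A := by
      intro γ _ A
      exact Hent_comp_inj_s18 p A (fun z => (z, (0 : Fin 1))) (fun a b h => by simpa using h)
    have c2 : Hent p (fun t : Fin kV × X × Y1 × Y2 => (((0 : Fin 1), t.1), t.2.2.2))
        = Hent p (fun t => (t.1, t.2.2.2)) :=
      Hent_comp_inj_s18 p (fun t => (t.1, t.2.2.2)) (fun z => (((0 : Fin 1), z.1), z.2))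
        (by intro a b h; simp only [Prod.mk.injEq, true_and] at h; exact Prod.ext h.1 h.2)
    have c3 : Hent p (fun t : Fin kV × X × Y1 × Y2 => (t.2.2.1, ((0 : Fin 1), t.1)))
        = Hent p (fun t => (t.2.2.1, t.1)) :=
      Hent_comp_inj_s18 p (fun t => (t.2.2.1, t.1)) (Prod.map id (fun v => ((0 : Fin 1), v)))
        (Function.injective_id.prodMap hg0)
    have c6 : Hent p (fun t : Fin kV × X × Y1 × Y2 => (t.1, t.2.2.2, (0 : Fin 1)))
        = Hent p (fun t => (t.1, t.2.2.2)) :=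
      Hent_comp_inj_s18 p (fun t => (t.1, t.2.2.2)) (fun z => (z.1, z.2, (0 : Fin 1)))
        (by intro a b h; simp only [Prod.mk.injEq, and_true] at h; exact Prod.ext h.1 h.2)
    refine ⟨h1, h2, 1, kV, fun z => P z.2, ⟨fun z => hP.1 _, ?_⟩,
      fun ω => p ω.2, ?_, ?_, ?_, ?_⟩
    · rw [Fintype.sum_prod_type, Fin.sum_univ_one]
      exact hP.2
    · intro w v x y1 y2
      exact hp _ _ _ _
    · -- R1 bound
      rw [keyB]
      exact hR1
    · -- R2 bound
      simp only [MI, keyB] at hR2 ⊢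
      rw [hzl (fun t => t.1), c2]
      exact hR2
    · -- sum bound
      simp only [MI, CMI, CHent, keyB] at hSum ⊢
      rw [hzl (fun t => t.1), hzl (fun t => t.2.2.1), hzl (fun t => t.2.2.2),
        c3, hzr (fun t => t.1), hzr (fun t => t.2.2.2), c6, hW0]
      have m1 : (0 : ℝ) + Hent p (fun t : Fin kV × X × Y1 × Y2 => t.2.2.1)
          - Hent p (fun t : Fin kV × X × Y1 × Y2 => t.2.2.1) = 0 := by ring
      have m2 : (0 : ℝ) + Hent p (fun t : Fin kV × X × Y1 × Y2 => t.2.2.2)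
          - Hent p (fun t : Fin kV × X × Y1 × Y2 => t.2.2.2) = 0 := by ring
      rw [m1, m2, min_self]
      linarith [hSum]
end
end
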